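/- If ‖·‖ is an M-norm on M_n(ℂ), then there exists α > 0 such that ‖A‖ = α‖A‖_∞ for every normal matrix A ∈ M_n(ℂ). -/

import Mathlib

open Matrix BigOperators ComplexOrder

/-- Square complex matrices. -/
abbrev Mat (n : ℕ) := Matrix (Fin n) (Fin n) ℂ

/-- `N` is a norm on `Mat n`. -/
def IsMatrixNorm {n : ℕ} (N : Mat n → ℝ) : Prop :=
  (∀ A, N A = 0 ↔ A = 0) ∧
  (∀ (c : ℂ) (A : Mat n), N (c • A) = ‖c‖ * N A) ∧
  (∀ A B : Mat n, N (A + B) ≤ N A + N B)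

/-- A set of matrices is C*-convex. -/
def CStarConvex {n : ℕ} (K : Set (Mat n)) : Prop :=
  ∀ (k : ℕ) (C A : Fin k → Mat n), (∀ i, A i ∈ K) →
    (∑ i, (C i)ᴴ * C i = 1) → (∑ i, (C i)ᴴ * A i * C i) ∈ K

/-- `N` is an M-norm. -/
def IsMNorm {n : ℕ} (N : Mat n → ℝ) : Prop :=
  ∀ (k : ℕ) (C X : Fin k → Mat n), (∑ i, (C i)ᴴ * C i = 1) →
    N (∑ i, (C i)ᴴ * X i * C i) ≤ ⨆ i, N (X i)

/-- `N` is an L-norm. -/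
def IsLNorm {n : ℕ} (N : Mat n → ℝ) : Prop :=
  ∀ (k : ℕ) (C : Fin k → Mat n) (X : Mat n), (∑ i, (C i)ᴴ * C i = 1) →
    ∑ i, N (C i * X * (C i)ᴴ) ≤ N X

/-- The dual norm with respect to the pairing `⟨Y|X⟩ = Tr(Yᴴ X)`. -/
noncomputable def dualNorm {n : ℕ} (N : Mat n → ℝ) (Y : Mat n) : ℝ :=
  sSup {r | ∃ X : Mat n, N X ≤ 1 ∧ r = ‖(Yᴴ * X).trace‖}

/-- The operator (spectral) norm of a matrix. -/
noncomputable def opNorm {n : ℕ} (A : Mat n) : ℝ :=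
  ‖Matrix.toEuclideanCLM (𝕜 := ℂ) (n := Fin n) A‖

/-- The trace norm `‖A‖₁ = Tr((AᴴA)^{1/2})`. -/
noncomputable def traceNorm {n : ℕ} (A : Mat n) : ℝ :=
  ((Matrix.posSemidef_conjTranspose_mul_self A).1.eigenvectorUnitary.1 *
    diagonal (((↑) : ℝ → ℂ) ∘ Real.sqrt ∘ (Matrix.posSemidef_conjTranspose_mul_self A).1.eigenvalues) *
    (star (Matrix.posSemidef_conjTranspose_mul_self A).1.eigenvectorUnitary : Mat n)).trace.re

/-- The numerical radius. -/
noncomputable def numRadius {n : ℕ} (A : Mat n) : ℝ :=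
  sSup {r | ∃ x : EuclideanSpace ℂ (Fin n), ‖x‖ = 1 ∧
    r = ‖inner ℂ x (Matrix.toEuclideanCLM (𝕜 := ℂ) (n := Fin n) A x)‖}

/-!
A normal matrix is unitarily diagonalizable, and an M-norm is invariant under unitary
conjugation (apply the defining inequality with the single coefficient `U` and then with `Uᴴ`),
so it suffices to treat `diagonal μ`. Compressing with the diagonal matrix units gives
`N (diagonal μ) ≤ maxⱼ N (μⱼ • 1)`, while compressing `diagonal μ` with the units `E_{ji}`,
`i` varying, returns `μⱼ • 1`, so `N (μⱼ • 1) ≤ N (diagonal μ)`. Hence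
`N (diagonal μ) = N 1 · maxⱼ |μⱼ| = N 1 · ‖diagonal μ‖_∞`.
-/

open Module in
theorem LinearMap.IsSymmetric.exists_orthonormalBasis_eigenvectors_of_commute
    {𝕜 E : Type*} [RCLike 𝕜] [NormedAddCommGroup E] [InnerProductSpace 𝕜 E]
    [FiniteDimensional 𝕜 E] {n : ℕ} (hn : finrank 𝕜 E = n) {S T : E →ₗ[𝕜] E}
    (hS : S.IsSymmetric) (hT : T.IsSymmetric) (hST : Commute S T) :
    ∃ (b : OrthonormalBasis (Fin n) 𝕜 E) (s t : Fin n → 𝕜),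
      ∀ j, S (b j) = s j • b j ∧ T (b j) = t j • b j := by
  classical
  set V : 𝕜 × 𝕜 → Submodule 𝕜 E := fun i => End.eigenspace S i.2 ⊓ End.eigenspace T i.1
  have hV : DirectSum.IsInternal V := directSum_isInternal_of_commute hS hT hST
  -- a subordinate orthonormal basis needs a finite index type: keep the nonzero joint eigenspaces
  have : Fintype {i // V i ≠ ⊥} :=
    (DirectSum.isInternal_submodule_iff_iSupIndep_and_iSup_eq_top V |>.mp hV).1
      |>.fintypeNeBotOfFiniteDimensional
  have hV' := DirectSum.isInternal_ne_bot_iff.mpr hV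
  have hVorth := (orthogonalFamily_eigenspace_inf_eigenspace hS hT).comp
    (Subtype.val_injective (p := fun i => V i ≠ ⊥))
  refine ⟨hV'.subordinateOrthonormalBasis hn hVorth,
    fun j => (hV'.subordinateOrthonormalBasisIndex hn j hVorth).1.2,
    fun j => (hV'.subordinateOrthonormalBasisIndex hn j hVorth).1.1, fun j => ?_⟩
  obtain ⟨hSj, hTj⟩ :=
    Submodule.mem_inf.mp (hV'.subordinateOrthonormalBasis_subordinate hn j hVorth)
  exact ⟨End.mem_eigenspace_iff.mp hSj, End.mem_eigenspace_iff.mp hTj⟩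

open ComplexStarModule in
theorem ContinuousLinearMap.exists_orthonormalBasis_eigenvectors_of_isStarNormal
    {E : Type*} [NormedAddCommGroup E] [InnerProductSpace ℂ E] [FiniteDimensional ℂ E]
    {n : ℕ} (hn : Module.finrank ℂ E = n) (T : E →L[ℂ] E) [IsStarNormal T] :
    ∃ (b : OrthonormalBasis (Fin n) ℂ E) (μ : Fin n → ℂ), ∀ j, T (b j) = μ j • b j := by
  have hsymm (R : selfAdjoint (E →L[ℂ] E)) : (R : E →ₗ[ℂ] E).IsSymmetric :=
    ContinuousLinearMap.isSelfAdjoint_iff_isSymmetric.mp R.2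
  have hcomm : Commute ((ℜ T : E →L[ℂ] E) : E →ₗ[ℂ] E) (ℑ T : E →L[ℂ] E) :=
    (Commute.realPart_imaginaryPart T).map ContinuousLinearMap.toLinearMapRingHom
  obtain ⟨b, s, t, hb⟩ :=
    (hsymm _).exists_orthonormalBasis_eigenvectors_of_commute hn (hsymm _) hcomm
  refine ⟨b, fun j => s j + Complex.I * t j, fun j => ?_⟩
  obtain ⟨hs, ht⟩ := hb j
  rw [ContinuousLinearMap.coe_coe] at hs ht
  conv_lhs => rw [← realPart_add_I_smul_imaginaryPart T]
  rw [_root_.add_apply, _root_.smul_apply, hs, ht, smul_smul, add_smul]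

theorem Matrix.exists_unitary_eq_mul_diagonal_mul_star_of_normal {n : ℕ} (A : Mat n)
    (hA : Aᴴ * A = A * Aᴴ) :
    ∃ (U : unitaryGroup (Fin n) ℂ) (μ : Fin n → ℂ),
      A = (U : Mat n) * diagonal μ * star (U : Mat n) := by
  have : IsStarNormal A := ⟨hA⟩
  obtain ⟨b, μ, hb⟩ := ContinuousLinearMap.exists_orthonormalBasis_eigenvectors_of_isStarNormal
    finrank_euclideanSpace_fin (toEuclideanCLM (n := Fin n) (𝕜 := ℂ) A)
  -- the unitary whose columns are the eigenvectors `b j`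
  let U : unitaryGroup (Fin n) ℂ :=
    ⟨(EuclideanSpace.basisFun (Fin n) ℂ).toBasis.toMatrix b.toBasis,
      (EuclideanSpace.basisFun (Fin n) ℂ).toMatrix_orthonormalBasis_mem_unitary b⟩
  have hAU : A * U = U * diagonal μ := by
    ext i j
    have hbji := congrFun (congrArg WithLp.ofLp (hb j)) i
    simp only [ofLp_toEuclideanCLM] at hbji
    rw [mul_diagonal]
    simpa [U, Matrix.mul_apply, mulVec, dotProduct, Module.Basis.toMatrix_apply, mul_comm]
      using hbji
  refine ⟨U, μ, ?_⟩
  rw [← hAU, mul_assoc, Unitary.mul_star_self_of_mem U.2, mul_one]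

section OpNorm

open scoped Matrix.Norms.L2Operator

theorem opNorm_unitary_mul_mul_star {n : ℕ} (U : unitaryGroup (Fin n) ℂ) (X : Mat n) :
    opNorm ((U : Mat n) * X * star (U : Mat n)) = opNorm X := by
  rw [opNorm, ← cstar_norm_def, ← Unitary.coe_star, CStarRing.norm_mul_coe_unitary,
    CStarRing.norm_coe_unitary_mul]
  rfl

theorem opNorm_diagonal {n : ℕ} (μ : Fin n → ℂ) : opNorm (diagonal μ) = ‖μ‖ :=
  l2_opNorm_diagonal μ

end OpNorm

namespace IsMatrixNorm

variable {n : ℕ} {N : Mat n → ℝ}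

theorem nonneg (hN : IsMatrixNorm N) (A : Mat n) : 0 ≤ N A := by
  obtain ⟨hzero, hsmul, hadd⟩ := hN
  have hneg : N (-A) = N A := by simpa using hsmul (-1) A
  have := hadd A (-A)
  rw [add_neg_cancel, (hzero 0).mpr rfl, hneg] at this
  linarith

theorem pos_of_ne_zero (hN : IsMatrixNorm N) {A : Mat n} (hA : A ≠ 0) : 0 < N A :=
  (hN.nonneg A).lt_of_ne fun h => hA ((hN.1 A).mp h.symm)

end IsMatrixNorm

namespace IsMNorm

variable {n : ℕ} {N : Mat n → ℝ}

theorem apply_unitary_mul_mul_star (hM : IsMNorm N) (U : unitaryGroup (Fin n) ℂ) (X : Mat n) :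
    N ((U : Mat n) * X * star (U : Mat n)) = N X := by
  have hle (V : unitaryGroup (Fin n) ℂ) (Y : Mat n) :
      N ((V : Mat n) * Y * star (V : Mat n)) ≤ N Y := by
    simpa [← star_eq_conjTranspose, Unitary.mul_star_self_of_mem V.2]
      using hM 1 ![star (V : Mat n)] ![Y]
  have hX : star (U : Mat n) * ((U : Mat n) * X * star (U : Mat n)) * U = X := by
    rw [← mul_assoc, ← mul_assoc, Unitary.star_mul_self_of_mem U.2, one_mul, mul_assoc,
      Unitary.star_mul_self_of_mem U.2, mul_one]
  refine le_antisymm (hle U X) ?_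
  simpa [hX] using hle (star U) ((U : Mat n) * X * star (U : Mat n))

theorem apply_diagonal_le_iSup (hM : IsMNorm N) (μ : Fin n → ℂ) :
    N (diagonal μ) ≤ ⨆ j, N (μ j • 1) := by
  simpa [conjTranspose_single, sum_single_one, sum_single_eq_diagonal]
    using hM n (fun j => single j j 1) (fun j => μ j • 1)

theorem apply_smul_one_le_apply_diagonal (hM : IsMNorm N) (μ : Fin n → ℂ) (j : Fin n) :
    N (μ j • 1) ≤ N (diagonal μ) := by
  have : Nonempty (Fin n) := ⟨j⟩
  have hC : ∑ i, (single j i (1 : ℂ))ᴴ * single j i 1 = 1 := by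
    simp [conjTranspose_single, sum_single_one]
  have hsum : ∑ i, (single j i (1 : ℂ))ᴴ * diagonal μ * single j i 1 = μ j • 1 := by
    simp [conjTranspose_single, ← sum_single_one, Finset.smul_sum, smul_single]
  have h := hM n (fun i => single j i 1) (fun _ => diagonal μ) hC
  rwa [hsum, ciSup_const] at h

theorem apply_diagonal (hN : IsMatrixNorm N) (hM : IsMNorm N) (μ : Fin n → ℂ) :
    N (diagonal μ) = N 1 * ‖μ‖ := by
  refine le_antisymm ((hM.apply_diagonal_le_iSup μ).trans (Real.iSup_le (fun j => ?_) ?_)) ?_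
  · rw [hN.2.1, mul_comm]
    exact mul_le_mul_of_nonneg_left (norm_le_pi_norm μ j) (hN.nonneg 1)
  · exact mul_nonneg (hN.nonneg 1) (norm_nonneg μ)
  · rcases isEmpty_or_nonempty (Fin n) with _ | _
    · simp [Subsingleton.elim μ 0, hN.nonneg]
    · obtain ⟨j, hj⟩ := (IsGreatest.pi_norm μ).1
      rw [← hj, mul_comm, ← hN.2.1]
      exact hM.apply_smul_one_le_apply_diagonal μ j

theorem apply_eq_mul_opNorm_of_normal (hN : IsMatrixNorm N) (hM : IsMNorm N) {A : Mat n}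
    (hA : Aᴴ * A = A * Aᴴ) : N A = N 1 * opNorm A := by
  obtain ⟨U, μ, rfl⟩ := exists_unitary_eq_mul_diagonal_mul_star_of_normal A hA
  rw [hM.apply_unitary_mul_mul_star, opNorm_unitary_mul_mul_star, opNorm_diagonal,
    hM.apply_diagonal hN]

end IsMNorm

theorem MNorm_eq_opNorm_on_normal {n : ℕ} (N : Mat n → ℝ)
    (hN : IsMatrixNorm N) (hM : IsMNorm N) :
    ∃ α : ℝ, 0 < α ∧ ∀ A : Mat n, Aᴴ * A = A * Aᴴ → N A = α * opNorm A := by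
  rcases n.eq_zero_or_pos with rfl | hn
  -- in dimension `0` the matrix `1` is `0`, so `N 1` cannot serve as `α`
  · refine ⟨1, one_pos, fun A hA => ?_⟩
    rw [hM.apply_eq_mul_opNorm_of_normal hN hA, Subsingleton.elim A 0]
    simp [opNorm]
  · have : NeZero n := ⟨hn.ne'⟩
    exact ⟨N 1, hN.pos_of_ne_zero one_ne_zero, fun A => hM.apply_eq_mul_opNorm_of_normal hN⟩
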